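/- Let K := {z ∈ ℂ : |z − 1| ≤ 1} ∪ {z ∈ ℂ : |z + 1| ≤ 1} and let P(K) denote the closure, in the supremum norm of C(K, ℂ), of the subalgebra of functions on K given by restrictions of complex polynomials. If f ∈ P(K) and the complex conjugate function z ↦ conj(f(z)) also belongs to P(K), then f is a constant function. -/

import Mathlib

/-!
On the interior of `K` a uniform limit of polynomials is holomorphic. If both `f` and `conj ∘ f`
are holomorphic at a point, the real derivative of `f` is both `ℂ`-linear and conjugate-linear,
hence zero; so `f` is constant on each of the two open discs, hence by continuity on each closed
disc, and the two constants agree at the common point `0`.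
-/

open Complex Metric Filter Set ComplexConjugate

theorem Complex.deriv_eq_zero_of_differentiableAt_conj_comp {F : ℂ → ℂ} {x : ℂ}
    (hF : DifferentiableAt ℂ F x) (hF' : DifferentiableAt ℂ (conj ∘ F) x) :
    deriv F x = 0 := by
  have key : ∀ v : ℂ, conj (deriv F x * v) = deriv (conj ∘ F) x * v := fun v =>
    congr($((hF.hasDerivAt.complexToReal_fderiv.star).unique
      hF'.hasDerivAt.complexToReal_fderiv) v)
  have h1 := key 1
  have hI := key I
  simp only [mul_one, map_mul, conj_I, mul_neg] at h1 hI
  rw [← h1] at hI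
  have h2 : conj (deriv F x) * (2 * I) = 0 := by linear_combination -hI
  simpa [I_ne_zero] using h2

theorem differentiableOn_interior_of_mem_closure_polynomials {K : Set ℂ} (hK : IsCompact K)
    {h : C(K, ℂ)}
    (hh : h ∈ closure {g : C(K, ℂ) | ∃ p : Polynomial ℂ, ∀ z : K, g z = p.eval (z : ℂ)})
    {H : ℂ → ℂ} (hH : ∀ z : K, H z = h z) :
    DifferentiableOn ℂ H (interior K) := by
  have : CompactSpace K := isCompact_iff_compactSpace.mp hK
  obtain ⟨u, hu, hlim⟩ := mem_closure_iff_seq_limit.mp hh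
  choose p hp using hu
  have hunif : TendstoUniformlyOn (fun n z => (p n).eval z) H atTop K := by
    rw [tendstoUniformlyOn_iff_tendstoUniformly_comp_coe]
    convert ContinuousMap.tendsto_iff_tendstoUniformly.mp hlim using 1
    · ext n z; exact (hp n z).symm
    · ext z; exact hH z
  exact (hunif.tendstoLocallyUniformlyOn.mono interior_subset).differentiableOn
    (.of_forall fun n => (p n).differentiable.differentiableOn) isOpen_interior

theorem ContinuousMap.continuousOn_extend_val {X Y : Type*} [TopologicalSpace X]
    [TopologicalSpace Y] {s : Set X} (f : C(s, Y)) (e : X → Y) :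
    ContinuousOn (Function.extend Subtype.val f e) s :=
  continuousOn_iff_continuous_domRestrict.mpr <| by
    convert f.continuous; ext z; exact Subtype.val_injective.extend_apply _ _ z

theorem Complex.eqOn_closure_of_differentiableOn_conj_comp {U : Set ℂ} {F : ℂ → ℂ}
    (hU : IsOpen U) (hU' : IsPreconnected U) (hFc : ContinuousOn F (closure U))
    (hF : DifferentiableOn ℂ F U) (hF' : DifferentiableOn ℂ (conj ∘ F) U) {c : ℂ} (hc : c ∈ U) :
    EqOn F (fun _ => F c) (closure U) := by
  have hderiv : EqOn (deriv F) 0 U := fun x hx =>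
    deriv_eq_zero_of_differentiableAt_conj_comp (hF.differentiableAt (hU.mem_nhds hx))
      (hF'.differentiableAt (hU.mem_nhds hx))
  exact EqOn.of_subset_closure (fun x hx => hU.is_const_of_deriv_eq_zero hU' hF hderiv hx hc)
    hFc continuousOn_const subset_closure subset_rfl

theorem eqOn_closedBall_of_mem_closure_polynomials_of_conj {K : Set ℂ} (hK : IsCompact K)
    {f g : C(K, ℂ)}
    (hf : f ∈ closure {g : C(K, ℂ) | ∃ p : Polynomial ℂ, ∀ z : K, g z = p.eval (z : ℂ)})
    (hg : g ∈ closure {g : C(K, ℂ) | ∃ p : Polynomial ℂ, ∀ z : K, g z = p.eval (z : ℂ)})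
    (hgf : ∀ z : K, g z = conj (f z)) {c : ℂ} {r : ℝ} (hr : 0 < r) (hc : closedBall c r ⊆ K) :
    EqOn (Function.extend Subtype.val f 0) (fun _ => Function.extend Subtype.val f 0 c)
      (closedBall c r) := by
  set F := Function.extend Subtype.val f 0
  set G := Function.extend Subtype.val g 0
  have hFf (z : K) : F z = f z := Subtype.val_injective.extend_apply _ _ z
  have hGg (z : K) : G z = g z := Subtype.val_injective.extend_apply _ _ z
  have hball : ball c r ⊆ interior K :=
    interior_maximal (ball_subset_closedBall.trans hc) isOpen_ball
  have hGF : EqOn G (conj ∘ F) (ball c r) := fun z hz =>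
    let z' : K := ⟨z, hc (ball_subset_closedBall hz)⟩
    (hGg z').trans ((hgf z').trans (congrArg conj (hFf z').symm))
  rw [← closure_ball c hr.ne'] at hc ⊢
  exact eqOn_closure_of_differentiableOn_conj_comp isOpen_ball (convex_ball c r).isPreconnected
    ((f.continuousOn_extend_val 0).mono hc)
    ((differentiableOn_interior_of_mem_closure_polynomials hK hf hFf).mono hball)
    (((differentiableOn_interior_of_mem_closure_polynomials hK hg hGg).mono hball).congr hGF.symm)
    (mem_ball_self hr)

/-- Let `K` be the union of the two closed unit discs centred at `1` and `-1`, and let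
`P(K)` be the closure in `C(K, ℂ)` (with the topology of uniform convergence, i.e. the
sup-norm topology, since `K` is compact) of the restrictions of complex polynomials.
If `f ∈ P(K)` and the pointwise complex conjugate of `f` also belongs to `P(K)`,
then `f` is constant. -/
theorem polynomial_closure_selfadjoint_implies_constant
    (K : Set ℂ)
    (hK : K = {z : ℂ | ‖z - 1‖ ≤ 1} ∪ {z : ℂ | ‖z + 1‖ ≤ 1})
    (PK : Set C(K, ℂ))
    (hPK : PK = closure {g : C(K, ℂ) | ∃ p : Polynomial ℂ, ∀ z : K, g z = p.eval (z : ℂ)})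
    (f : C(K, ℂ)) (hf : f ∈ PK)
    (hconj : ∃ g ∈ PK, ∀ z : K, g z = starRingEnd ℂ (f z)) :
    ∃ c : ℂ, ∀ z : K, f z = c := by
  obtain ⟨g, hg, hgf⟩ := hconj
  subst hPK
  have hK' : K = closedBall 1 1 ∪ closedBall (-1) 1 := by
    simp only [hK, closedBall, dist_eq_norm, sub_neg_eq_add]
  have hKc : IsCompact K := hK' ▸ (isCompact_closedBall _ _).union (isCompact_closedBall _ _)
  have h₁ := eqOn_closedBall_of_mem_closure_polynomials_of_conj hKc hf hg hgf one_pos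
    (hK' ▸ subset_union_left)
  have h₂ := eqOn_closedBall_of_mem_closure_polynomials_of_conj hKc hf hg hgf (c := -1) one_pos
    (hK' ▸ subset_union_right)
  refine ⟨Function.extend Subtype.val f 0 0, fun z => ?_⟩
  rw [← Subtype.val_injective.extend_apply f 0 z]
  rcases (hK' ▸ z.2 : (z : ℂ) ∈ closedBall 1 1 ∪ closedBall (-1) 1) with hz | hz
  · rw [h₁ hz, h₁ (by norm_num : (0 : ℂ) ∈ closedBall 1 1)]
  · rw [h₂ hz, h₂ (by norm_num : (0 : ℂ) ∈ closedBall (-1) 1)]
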